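/- arXiv:2008.07195 — 2 statements merged into one kernel-verified Lean document; each statement's English description precedes it below -/
import Mathlib

section
/- Partial fraction decomposition: for positive integers $m, n$ and real $\mu$, $\frac{1}{(m-i\mu)\cdots(1-i\mu)(1+i\mu)\cdots(n+i\mu)} = \sum_{k=1}^m \frac{a_k(m,n)}{k - i\mu} + \sum_{k=1}^n \frac{b_k(m,n)}{k + i\mu}$ where $a_k(m,n) = \frac{(-1)^{k-1} k}{(m-k)!\,(n+k)!}$ and $b_k(m,n) = \frac{(-1)^{k-1} k}{(n-k)!\,(m+k)!}$. -/
/-!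
The poles $z = k$ ($1 ≤ k ≤ m$) and $z = -k$ ($1 ≤ k ≤ n$) are simple, so Lagrange
interpolation of the constant $1$ at these $m + n$ nodes $x_i$ writes the reciprocal of the nodal
polynomial $\prod_i (z - x_i)$ as $\sum_i w_i / (z - x_i)$ with barycentric weights
$w_i = \prod_{j ≠ i} (x_i - x_j)^{-1}$. Each weight is a product of two runs of consecutive
integers, i.e. a signed quotient of factorials, and comes out as $a_k(m,n)$ or $b_k(m,n)$.
-/

open Complex Finset Lagrange

theorem Lagrange.inv_prod_sub_eq_sum_nodalWeight_mul_inv {F ι : Type*} [Field F] [DecidableEq ι]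
    {s : Finset ι} {v : ι → F} {x : F} (hvs : Set.InjOn v s) (hs : s.Nonempty)
    (hx : ∀ i ∈ s, x ≠ v i) :
    (∏ i ∈ s, (x - v i))⁻¹ = ∑ i ∈ s, nodalWeight s v i * (x - v i)⁻¹ := by
  have h := eval_interpolate_not_at_node (1 : ι → F) hx
  simp only [interpolate_one hvs hs, Polynomial.eval_one, eval_nodal, Pi.one_apply,
    mul_one] at h
  exact inv_eq_of_mul_eq_one_right h.symm

section DisjSum

variable {F α β : Type*} [Field F] [DecidableEq α] [DecidableEq β]

theorem Finset.disjSum_erase_inl (s : Finset α) (t : Finset β) (a : α) :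
    (s.disjSum t).erase (.inl a) = (s.erase a).disjSum t := by
  ext (b | b) <;> simp

theorem Finset.disjSum_erase_inr (s : Finset α) (t : Finset β) (b : β) :
    (s.disjSum t).erase (.inr b) = s.disjSum (t.erase b) := by
  ext (a | a) <;> simp

theorem Lagrange.nodalWeight_disjSum_inl (s : Finset α) (t : Finset β) (v : α ⊕ β → F)
    (a : α) :
    nodalWeight (s.disjSum t) v (.inl a)
      = ((∏ a' ∈ s.erase a, (v (.inl a) - v (.inl a'))) *
          ∏ b ∈ t, (v (.inl a) - v (.inr b)))⁻¹ := by
  rw [nodalWeight, disjSum_erase_inl, prod_disjSum, prod_inv_distrib, prod_inv_distrib, mul_inv]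

theorem Lagrange.nodalWeight_disjSum_inr (s : Finset α) (t : Finset β) (v : α ⊕ β → F)
    (b : β) :
    nodalWeight (s.disjSum t) v (.inr b)
      = ((∏ a ∈ s, (v (.inr b) - v (.inl a))) *
          ∏ b' ∈ t.erase b, (v (.inr b) - v (.inr b')))⁻¹ := by
  rw [nodalWeight, disjSum_erase_inr, prod_disjSum, prod_inv_distrib, prod_inv_distrib, mul_inv]

end DisjSum

theorem prod_Icc_natCast_add_mul_factorial {R : Type*} [CommSemiring R] (n k : ℕ) :
    (∏ l ∈ Icc 1 n, ((k : R) + l)) * k.factorial = (n + k).factorial := by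
  induction n with
  | zero => simp
  | succ n ih =>
    rw [prod_Icc_succ_top (by omega), mul_right_comm, ih, Nat.add_right_comm, Nat.factorial_succ]
    push_cast
    ring

theorem prod_Ico_one_natCast_sub {R : Type*} [CommRing R] (k : ℕ) :
    ∏ l ∈ Ico 1 k, ((k : R) - l) = (k - 1).factorial := by
  have hreflect := prod_Ico_reflect (fun l : ℕ ↦ (l : R)) 1 (n := k) (m := k) (by omega)
  rw [Nat.add_sub_cancel_left, Nat.add_sub_cancel] at hreflect
  rw [← prod_congr rfl fun l hl ↦ Nat.cast_sub (mem_Ico.mp hl).2.le, hreflect]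
  rcases k with _ | k
  · simp
  · rw [← Nat.cast_prod, prod_Ico_id_eq_factorial, Nat.add_sub_cancel]

theorem prod_erase_Icc_one_natCast_sub {R : Type*} [CommRing R] {m k : ℕ} (hk : k ∈ Icc 1 m) :
    ∏ l ∈ (Icc 1 m).erase k, ((k : R) - l)
      = (-1) ^ (m - k) * (k - 1).factorial * (m - k).factorial := by
  obtain ⟨hk1, hkm⟩ := mem_Icc.mp hk
  induction m, hkm using Nat.le_induction with
  | base => simp [Icc_erase_right, prod_Ico_one_natCast_sub]
  | succ m hkm ih =>
    rw [← Ico_insert_right (by omega), Ico_add_one_right_eq_Icc, erase_insert_of_ne (by omega),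
      prod_insert (by simp), ih (mem_Icc.mpr ⟨hk1, hkm⟩), Nat.sub_add_comm hkm,
      Nat.factorial_succ]
    push_cast [Nat.cast_sub hkm]
    ring

/-- The coefficient $a_k(m,n)$; the coefficient $b_k(m,n)$ is `residueCoeff F n m k`. -/
def residueCoeff (F : Type*) [Field F] (m n k : ℕ) : F :=
  (-1) ^ (k - 1) * k / ((m - k).factorial * (n + k).factorial)

theorem inv_prod_erase_Icc_sub_mul_prod_Icc_add {F : Type*} [Field F] [CharZero F] {m k : ℕ}
    (hk : k ∈ Icc 1 m) (n : ℕ) :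
    ((∏ l ∈ (Icc 1 m).erase k, ((k : F) - l)) * ∏ l ∈ Icc 1 n, ((k : F) + l))⁻¹
      = (-1) ^ (m - 1) * residueCoeff F m n k := by
  obtain ⟨hk1, hkm⟩ := mem_Icc.mp hk
  have hfac : (k * (k - 1).factorial : F) = k.factorial := by
    rw [← Nat.mul_factorial_pred (by omega : k ≠ 0)]; push_cast; rfl
  have hsign : ((-1) ^ (m - 1) : F) = (-1) ^ (m - k) * (-1) ^ (k - 1) := by
    rw [← pow_add]; congr 1; omega
  have hadd := prod_Icc_natCast_add_mul_factorial (R := F) n k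
  have h1 : ((m - k).factorial : F) ≠ 0 := Nat.cast_ne_zero.mpr (Nat.factorial_ne_zero _)
  have h2 : ((n + k).factorial : F) ≠ 0 := Nat.cast_ne_zero.mpr (Nat.factorial_ne_zero _)
  refine inv_eq_of_mul_eq_one_left ?_
  rw [prod_erase_Icc_one_natCast_sub hk, residueCoeff]
  calc _ = ((-1) ^ (m - 1)) ^ 2 * ((∏ l ∈ Icc 1 n, ((k : F) + l)) * (k * (k - 1).factorial)
          / (n + k).factorial) := by
        rw [hsign]; field_simp
    _ = 1 := by
        rw [hfac, hadd, div_self h2, mul_one, ← pow_mul, pow_mul', neg_one_sq, one_pow]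

section PoleNode

variable {F : Type*} [Field F]

/-- `.inl j` is the pole $j$ of the first product, `.inr j` the pole $-j$ of the second. -/
def poleNode (F : Type*) [Field F] : ℕ ⊕ ℕ → F :=
  Sum.elim (fun j ↦ j) (fun j ↦ -j)

@[simp]
theorem poleNode_inl (j : ℕ) : poleNode F (.inl j) = j := rfl

@[simp]
theorem poleNode_inr (j : ℕ) : poleNode F (.inr j) = -j := rfl

theorem natCast_ne_neg_natCast [CharZero F] {a : ℕ} (ha : 1 ≤ a) (b : ℕ) :
    (a : F) ≠ -b := by
  rw [ne_eq, eq_neg_iff_add_eq_zero]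
  exact_mod_cast (by omega : a + b ≠ 0)

theorem injOn_poleNode [CharZero F] (m n : ℕ) :
    Set.InjOn (poleNode F) ((Icc 1 m).disjSum (Icc 1 n)) := by
  rintro (a | a) ha (b | b) hb hab <;>
    simp only [poleNode_inl, poleNode_inr, mem_coe, inl_mem_disjSum, inr_mem_disjSum, mem_Icc,
      Nat.cast_inj, neg_inj] at ha hb hab ⊢
  exacts [congrArg _ hab, (natCast_ne_neg_natCast ha.1 b hab).elim,
    (natCast_ne_neg_natCast hb.1 a hab.symm).elim, congrArg _ hab]

theorem neg_one_pow_mul_nodalWeight_inl [CharZero F] {m k : ℕ} (hk : k ∈ Icc 1 m) (n : ℕ) :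
    (-1) ^ m * nodalWeight ((Icc 1 m).disjSum (Icc 1 n)) (poleNode F) (.inl k)
      = -residueCoeff F m n k := by
  have hodd : Odd (m + (m - 1)) := ⟨m - 1, by have := mem_Icc.mp hk; omega⟩
  rw [nodalWeight_disjSum_inl]
  simp only [poleNode_inl, poleNode_inr, sub_neg_eq_add]
  rw [inv_prod_erase_Icc_sub_mul_prod_Icc_add hk, ← mul_assoc, ← pow_add, hodd.neg_one_pow,
    neg_one_mul]

theorem neg_one_pow_mul_nodalWeight_inr [CharZero F] {n k : ℕ} (hk : k ∈ Icc 1 n) (m : ℕ) :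
    (-1) ^ m * nodalWeight ((Icc 1 m).disjSum (Icc 1 n)) (poleNode F) (.inr k)
      = residueCoeff F n m k := by
  have hneg_add :
      ∏ l ∈ Icc 1 m, (-(k : F) - l) = (-1) ^ m * ∏ l ∈ Icc 1 m, ((k : F) + l) := by
    rw [prod_congr rfl fun (l : ℕ) _ ↦ (neg_add' (k : F) l).symm, prod_neg, Nat.card_Icc,
      Nat.add_sub_cancel]
  have hneg_sub : ∏ l ∈ (Icc 1 n).erase k, (-(k : F) - -l)
      = (-1) ^ (n - 1) * ∏ l ∈ (Icc 1 n).erase k, ((k : F) - l) := by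
    rw [prod_congr rfl fun (l : ℕ) _ ↦ (neg_sub' (k : F) l).symm, prod_neg,
      card_erase_of_mem hk, Nat.card_Icc, Nat.add_sub_cancel]
  rw [nodalWeight_disjSum_inr]
  simp only [poleNode_inl, poleNode_inr]
  rw [hneg_add, hneg_sub]
  calc _ = ((-1) ^ m * ((-1) ^ m)⁻¹) * ((-1) ^ (n - 1))⁻¹ *
          ((∏ l ∈ (Icc 1 n).erase k, ((k : F) - l)) *
            ∏ l ∈ Icc 1 m, ((k : F) + l))⁻¹ := by
        simp only [mul_inv]; ring
    _ = ((-1) ^ (n - 1))⁻¹ * ((-1) ^ (n - 1) * residueCoeff F n m k) := by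
        rw [mul_inv_cancel₀ (by simp), inv_prod_erase_Icc_sub_mul_prod_Icc_add hk, one_mul]
    _ = residueCoeff F n m k := inv_mul_cancel_left₀ (by simp) _

theorem prod_Icc_sub_mul_prod_Icc_add_eq_neg_one_pow_mul (m n : ℕ) (z : F) :
    (∏ j ∈ Icc 1 m, ((j : F) - z)) * ∏ j ∈ Icc 1 n, ((j : F) + z)
      = (-1) ^ m * ∏ i ∈ (Icc 1 m).disjSum (Icc 1 n), (z - poleNode F i) := by
  simp only [prod_disjSum, poleNode_inl, poleNode_inr, sub_neg_eq_add, ← mul_assoc,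
    ← neg_sub z, prod_neg, Nat.card_Icc, Nat.add_sub_cancel, add_comm z]

theorem inv_prod_Icc_sub_mul_prod_Icc_add [CharZero F] {m n : ℕ} (hmn : m + n ≠ 0) {z : F}
    (hzm : ∀ j ∈ Icc 1 m, (j : F) ≠ z) (hzn : ∀ j ∈ Icc 1 n, (j : F) ≠ -z) :
    ((∏ j ∈ Icc 1 m, ((j : F) - z)) * ∏ j ∈ Icc 1 n, ((j : F) + z))⁻¹
      = ∑ k ∈ Icc 1 m, residueCoeff F m n k / (k - z)
        + ∑ k ∈ Icc 1 n, residueCoeff F n m k / (k + z) := by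
  have hs : ((Icc 1 m).disjSum (Icc 1 n)).Nonempty := by
    rw [← card_pos, card_disjSum, Nat.card_Icc, Nat.card_Icc]
    omega
  have hz : ∀ i ∈ (Icc 1 m).disjSum (Icc 1 n), z ≠ poleNode F i := by
    rintro (a | a) ha <;>
      simp only [poleNode_inl, poleNode_inr, inl_mem_disjSum, inr_mem_disjSum] at ha ⊢
    · exact (hzm a ha).symm
    · exact fun h ↦ hzn a ha (by rw [h, neg_neg])
  rw [prod_Icc_sub_mul_prod_Icc_add_eq_neg_one_pow_mul, mul_inv, ← inv_pow, inv_neg_one,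
    inv_prod_sub_eq_sum_nodalWeight_mul_inv (injOn_poleNode m n) hs hz, mul_sum, sum_disjSum]
  congr 1 <;> refine sum_congr rfl fun k hk ↦ ?_ <;>
    simp only [poleNode_inl, poleNode_inr, ← mul_assoc]
  · rw [neg_one_pow_mul_nodalWeight_inl hk, neg_mul, ← mul_neg, ← inv_neg, neg_sub,
      div_eq_mul_inv]
  · rw [neg_one_pow_mul_nodalWeight_inr hk, sub_neg_eq_add, add_comm, div_eq_mul_inv]

end PoleNode

theorem partial_fraction_decomposition_general (m n : ℕ) (hm : 1 ≤ m) (μ : ℝ) :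
    ((∏ j ∈ Icc 1 m, ((j : ℂ) - I * μ)) * ∏ j ∈ Icc 1 n, ((j : ℂ) + I * μ))⁻¹
      = (∑ k ∈ Icc 1 m,
            ((-1 : ℂ) ^ (k - 1) * k / (((m - k).factorial : ℂ) * ((n + k).factorial : ℂ)))
              / ((k : ℂ) - I * μ))
        + ∑ k ∈ Icc 1 n,
            ((-1 : ℂ) ^ (k - 1) * k / (((n - k).factorial : ℂ) * ((m + k).factorial : ℂ)))
              / ((k : ℂ) + I * μ) := by
  have hre {j : ℕ} (hj : 1 ≤ j) {w : ℂ} (hw : w.re = 0) : (j : ℂ) ≠ w := fun h ↦ by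
    have := congrArg re h
    simp only [natCast_re, hw, Nat.cast_eq_zero] at this
    omega
  exact inv_prod_Icc_sub_mul_prod_Icc_add (by omega)
    (fun j hj ↦ hre (mem_Icc.mp hj).1 (by simp)) (fun j hj ↦ hre (mem_Icc.mp hj).1 (by simp))

/-- Partial fraction decomposition of
`1/((m - iμ)⋯(1 - iμ)(1 + iμ)⋯(n + iμ))`. -/
theorem partial_fraction_decomposition (m n : ℕ) (hm : 1 ≤ m) (hn : 1 ≤ n) (μ : ℝ) :
    ((∏ j ∈ Icc 1 m, ((j : ℂ) - I * μ)) * ∏ j ∈ Icc 1 n, ((j : ℂ) + I * μ))⁻¹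
      = (∑ k ∈ Icc 1 m,
            ((-1 : ℂ) ^ (k - 1) * k / (((m - k).factorial : ℂ) * ((n + k).factorial : ℂ)))
              / ((k : ℂ) - I * μ))
        + ∑ k ∈ Icc 1 n,
            ((-1 : ℂ) ^ (k - 1) * k / (((n - k).factorial : ℂ) * ((m + k).factorial : ℂ)))
              / ((k : ℂ) + I * μ) :=
  partial_fraction_decomposition_general m n hm μ
end

section
/- Let $\alpha > 0$ and $n \le \lfloor \alpha - 1 \rfloor$ be a natural number. The function $R_n^{(\alpha)}(u) = (1+u^2)^{\alpha+1/2}\frac{d^n}{du^n}[(1+u^2)^{n-\alpha-1/2}]$ satisfies the eigenvalue equation $(1+u^2) (R_n^{(\alpha)})''(u) + (1 - 2\alpha) u (R_n^{(\alpha)})'(u) = -n(2\alpha - n) R_n^{(\alpha)}(u)$ for all real $u$. -/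
open Real

/-- Routh–Romanovski polynomial via the Rodrigues formula. -/
noncomputable def RouthRomanovski (α : ℝ) (n : ℕ) (u : ℝ) : ℝ :=
  Real.rpow (1 + u ^ 2) (α + 1 / 2) *
    iteratedDeriv n (fun v : ℝ => Real.rpow (1 + v ^ 2) ((n : ℝ) - α - 1 / 2)) u

namespace RRaux

noncomputable def f (β : ℝ) : ℝ → ℝ := fun v => (1 + v ^ 2) ^ β

lemma base_pos (u : ℝ) : (0:ℝ) < 1 + u ^ 2 := by positivity

lemma hasDerivAt_base (u : ℝ) : HasDerivAt (fun v : ℝ => 1 + v ^ 2) (2 * u) u := by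
  simpa using ((hasDerivAt_pow 2 u).const_add 1)

lemma hasDerivAt_f (β u : ℝ) :
    HasDerivAt (f β) (β * (1 + u ^ 2) ^ (β - 1) * (2 * u)) u := by
  have := (hasDerivAt_base u).rpow_const (p := β) (Or.inl (base_pos u).ne')
  convert this using 1
  · rfl
  · ring

lemma contDiff_f (β : ℝ) : ContDiff ℝ (⊤ : ℕ∞) (f β) := by
  rw [contDiff_iff_contDiffAt]
  intro u
  have h1 : ContDiffAt ℝ (⊤ : ℕ∞) (fun x : ℝ => x ^ β) (1 + u ^ 2) :=
    Real.contDiffAt_rpow_const_of_ne (base_pos u).ne'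
  exact h1.comp u ((contDiff_const.add (contDiff_id.pow 2)).contDiffAt)

lemma diff_iter (β : ℝ) (m : ℕ) : Differentiable ℝ (iteratedDeriv m (f β)) :=
  (contDiff_f β).differentiable_iteratedDeriv m (by exact_mod_cast lt_top_iff_ne_top.2 (by simp))

lemma hasDerivAt_iter (β : ℝ) (m : ℕ) (u : ℝ) :
    HasDerivAt (iteratedDeriv m (f β)) (iteratedDeriv (m + 1) (f β) u) u := by
  have := ((diff_iter β m) u).hasDerivAt
  rwa [iteratedDeriv_succ]

lemma lemB (β : ℝ) (u : ℝ) :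
    (1 + u ^ 2) * iteratedDeriv 1 (f β) u = 2 * β * u * f β u := by
  rw [iteratedDeriv_one, (hasDerivAt_f β u).deriv]
  have h : (1 + u ^ 2) ^ (β - 1) = (1 + u ^ 2) ^ β / (1 + u ^ 2) := by
    rw [Real.rpow_sub (base_pos u), Real.rpow_one]
  rw [h]
  show _ = 2 * β * u * (1 + u ^ 2) ^ β
  field_simp

lemma lemC (β : ℝ) : ∀ (k : ℕ) (u : ℝ),
    (1 + u ^ 2) * iteratedDeriv (k + 2) (f β) u
      + (2 * k + 2 - 2 * β) * u * iteratedDeriv (k + 1) (f β) u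
      = ((k : ℝ) + 1) * (2 * β - k) * iteratedDeriv k (f β) u := by
  intro k
  induction k with
  | zero =>
    intro u
    have hF : HasDerivAt (fun v => (1 + v ^ 2) * iteratedDeriv 1 (f β) v)
        (2 * u * iteratedDeriv 1 (f β) u + (1 + u ^ 2) * iteratedDeriv 2 (f β) u) u :=
      (hasDerivAt_base u).mul (hasDerivAt_iter β 1 u)
    have hG : HasDerivAt (fun v => 2 * β * v * f β v)
        (2 * β * f β u + 2 * β * u * iteratedDeriv 1 (f β) u) u := by
      have h0 : HasDerivAt (f β) (iteratedDeriv 1 (f β) u) u := by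
        simpa [iteratedDeriv_zero] using hasDerivAt_iter β 0 u
      have := ((hasDerivAt_id u).const_mul (2 * β)).mul h0
      simp only [id_eq] at this
      convert this using 1
      · rfl
      · rfl
      · rfl
      · ring
    have hfun : (fun v => (1 + v ^ 2) * iteratedDeriv 1 (f β) v)
        = (fun v => 2 * β * v * f β v) := funext (lemB β)
    rw [hfun] at hF
    have key := hF.unique hG
    simp only [iteratedDeriv_zero] at *
    push_cast
    linear_combination key
  | succ k ih =>
    intro u
    have hF : HasDerivAt (fun v => (1 + v ^ 2) * iteratedDeriv (k + 2) (f β) v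
          + (2 * k + 2 - 2 * β) * v * iteratedDeriv (k + 1) (f β) v)
        (2 * u * iteratedDeriv (k + 2) (f β) u + (1 + u ^ 2) * iteratedDeriv (k + 3) (f β) u
          + ((2 * k + 2 - 2 * β) * iteratedDeriv (k + 1) (f β) u
             + (2 * k + 2 - 2 * β) * u * iteratedDeriv (k + 2) (f β) u)) u := by
      have h1 := (hasDerivAt_base u).mul (hasDerivAt_iter β (k + 2) u)
      have h2 := ((hasDerivAt_id u).const_mul (2 * (k:ℝ) + 2 - 2 * β)).mul (hasDerivAt_iter β (k + 1) u)
      have := h1.add h2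
      simp only [id_eq] at this
      convert this using 1
      · rfl
      · rfl
      · rfl
      · ring
    have hG : HasDerivAt (fun v => ((k : ℝ) + 1) * (2 * β - k) * iteratedDeriv k (f β) v)
        (((k : ℝ) + 1) * (2 * β - k) * iteratedDeriv (k + 1) (f β) u) u :=
      (hasDerivAt_iter β k u).const_mul _
    have hfun : (fun v => (1 + v ^ 2) * iteratedDeriv (k + 2) (f β) v
          + (2 * k + 2 - 2 * β) * v * iteratedDeriv (k + 1) (f β) v)
        = (fun v => ((k : ℝ) + 1) * (2 * β - k) * iteratedDeriv k (f β) v) := funext ih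
    rw [hfun] at hF
    have key := hF.unique hG
    push_cast
    push_cast at key
    linear_combination key

lemma main (α : ℝ) (n : ℕ) (u : ℝ) :
    (1 + u ^ 2) * deriv (deriv (fun v => f (α + 1/2) v
        * iteratedDeriv n (f ((n:ℝ) - α - 1/2)) v)) u
      + (1 - 2 * α) * u * deriv (fun v => f (α + 1/2) v
        * iteratedDeriv n (f ((n:ℝ) - α - 1/2)) v) u
      = -((n:ℝ) * (2 * α - n)) * (f (α + 1/2) u
        * iteratedDeriv n (f ((n:ℝ) - α - 1/2)) u) := by
  have hP := base_pos u
  have hR : ∀ w, HasDerivAt (fun v => f (α + 1/2) v * iteratedDeriv n (f ((n:ℝ) - α - 1/2)) v)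
      ((α + 1/2) * (1 + w ^ 2) ^ (α + 1/2 - 1) * (2 * w) * iteratedDeriv n (f ((n:ℝ) - α - 1/2)) w
        + f (α + 1/2) w * iteratedDeriv (n + 1) (f ((n:ℝ) - α - 1/2)) w) w :=
    fun w => (hasDerivAt_f (α + 1/2) w).mul (hasDerivAt_iter ((n:ℝ) - α - 1/2) n w)
  have hderiv1 : deriv (fun v => f (α + 1/2) v * iteratedDeriv n (f ((n:ℝ) - α - 1/2)) v)
      = fun w => (α + 1/2) * (1 + w ^ 2) ^ (α + 1/2 - 1) * (2 * w)
            * iteratedDeriv n (f ((n:ℝ) - α - 1/2)) w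
          + f (α + 1/2) w * iteratedDeriv (n + 1) (f ((n:ℝ) - α - 1/2)) w :=
    funext fun w => (hR w).deriv
  have h1 : HasDerivAt (fun w : ℝ => (α + 1/2) * (1 + w ^ 2) ^ (α + 1/2 - 1))
      ((α + 1/2) * ((α + 1/2 - 1) * (1 + u ^ 2) ^ (α + 1/2 - 1 - 1) * (2 * u))) u :=
    (hasDerivAt_f (α + 1/2 - 1) u).const_mul _
  have h2 : HasDerivAt (fun w : ℝ => 2 * w) 2 u := by
    simpa using (hasDerivAt_id u).const_mul 2
  have h12 := (h1.mul h2).mul (hasDerivAt_iter ((n:ℝ) - α - 1/2) n u)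
  have h3 := (hasDerivAt_f (α + 1/2) u).mul (hasDerivAt_iter ((n:ℝ) - α - 1/2) (n + 1) u)
  have hE := h12.add h3
  have hdd : deriv (deriv (fun v => f (α + 1/2) v * iteratedDeriv n (f ((n:ℝ) - α - 1/2)) v)) u
      = ((α + 1/2) * ((α + 1/2 - 1) * (1 + u ^ 2) ^ (α + 1/2 - 1 - 1) * (2 * u)) * (2 * u)
            + (α + 1/2) * (1 + u ^ 2) ^ (α + 1/2 - 1) * 2) * iteratedDeriv n (f ((n:ℝ) - α - 1/2)) u
          + (α + 1/2) * (1 + u ^ 2) ^ (α + 1/2 - 1) * (2 * u)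
              * iteratedDeriv (n + 1) (f ((n:ℝ) - α - 1/2)) u
          + ((α + 1/2) * (1 + u ^ 2) ^ (α + 1/2 - 1) * (2 * u)
              * iteratedDeriv (n + 1) (f ((n:ℝ) - α - 1/2)) u
            + f (α + 1/2) u * iteratedDeriv (n + 1 + 1) (f ((n:ℝ) - α - 1/2)) u) := by
    rw [hderiv1]
    exact hE.deriv
  rw [hdd, (hR u).deriv]
  have hq1 : (1 + u ^ 2) ^ (α + 1/2 - 1)
      = (1 + u ^ 2) ^ (α + 1/2 - 1 - 1) * (1 + u ^ 2) := by
    rw [← Real.rpow_add_one hP.ne']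
    congr 1
    ring
  have hq0 : (1 + u ^ 2) ^ (α + 1/2)
      = (1 + u ^ 2) ^ (α + 1/2 - 1) * (1 + u ^ 2) := by
    rw [← Real.rpow_add_one hP.ne']
    congr 1
    ring
  have hq2 : f (α + 1/2) u
      = (1 + u ^ 2) ^ (α + 1/2 - 1 - 1) * (1 + u ^ 2) * (1 + u ^ 2) := by
    show (1 + u ^ 2) ^ (α + 1/2) = _
    rw [hq0, hq1]
  have hC := lemC ((n:ℝ) - α - 1/2) n u
  simp only [show n + 1 + 1 = n + 2 from rfl] at hdd ⊢
  rw [hq1, hq2]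
  push_cast at hC ⊢
  linear_combination ((1 + u ^ 2) ^ (α + 1/2 - 1 - 1) * (1 + u ^ 2) * (1 + u ^ 2)) * hC

end RRaux

theorem routhRomanovski_eigenfunction (α : ℝ) (hα : 0 < α) (n : ℕ)
    (hn : (n : ℝ) ≤ α - 1) (u : ℝ) :
    (1 + u ^ 2) * deriv (deriv (RouthRomanovski α n)) u
        + (1 - 2 * α) * u * deriv (RouthRomanovski α n) u
      = -(n * (2 * α - n)) * RouthRomanovski α n u := by
  have h : RouthRomanovski α n
      = fun v => RRaux.f (α + 1/2) v * iteratedDeriv n (RRaux.f ((n:ℝ) - α - 1/2)) v := rfl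
  rw [h]
  exact RRaux.main α n u
end
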